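/- For all natural numbers n, k and every real number α, the following two expansions are equal: Σ_{r=0}^{n} q^{αr} · binom(n,r)_{q^s} · S_{s,q}[r,k] · Π_{i=0}^{n−r−1} [α + s·i]_q = Σ_{r=0}^{n} q^{αk} · S_{s,q}[n,r] · binom(r,k)_{q^{s−1}} · Π_{i=0}^{r−k−1} [α + i·(s−1)]_q. (Both sides equal the total weight of all placements of n−k rooks on the augmented staircase board J'_{n;α}; Lemma on two expansions.) -/

import Mathlib

/-- The `q`-bracket `[t]_q = (q^t - 1)/(q - 1)` (real exponentiation). -/
noncomputable def qBracket (q t : ℝ) : ℝ := (q ^ t - 1) / (q - 1)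

open Classical in
/-- The `Q`-binomial coefficient: the sum of `Q^(t₁+⋯+t_{n-k})` over all weakly
increasing integer tuples `0 ≤ t₁ ≤ ⋯ ≤ t_{n-k} ≤ k` when `k ≤ n`, and `0` when `k > n`. -/
noncomputable def qBinom (Q : ℝ) (n k : ℕ) : ℝ :=
  if k ≤ n then
    ∑ f ∈ Finset.univ.filter (fun f : Fin (n - k) → Fin (k + 1) => Monotone f),
      Q ^ (∑ i, (f i : ℕ))
  else 0

/-- The generalized `q`-Stirling numbers `S_{s,q}[n,k]` of Goldman–Haglund type. -/
noncomputable def genStirling (s q : ℝ) : ℕ → ℕ → ℝ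
  | 0, 0 => 1
  | 0, _ + 1 => 0
  | _ + 1, 0 => 0
  | n + 1, k + 1 =>
    if k + 1 ≤ n + 1 then
      q ^ (s * (n : ℝ) - (s - 1) * (k : ℝ)) * genStirling s q n k
        + qBracket q (s * (n : ℝ) - (s - 1) * ((k : ℝ) + 1)) * genStirling s q n (k + 1)
    else 0

/-! Both expansions satisfy the same triangular recurrence in `n`, the `α`-shifted Stirling
recurrence defining `augStirling`, with the same initial row, so they agree. On the left this
comes from the `q`-Pascal rule for `binom(n + 1, r)_{q^s}` followed by the Stirling recurrence
for `S[r + 1, k]`; on the right from the Stirling recurrence for `S[n + 1, r]` followed by the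
`q`-Pascal rule for `binom(r + 1, k)_{q^(s-1)}`. In both cases the coefficients recombine through
the single identity `[a + b]_q = [a]_q + q^a [b]_q`. -/

open Finset

lemma qBracket_add {q : ℝ} (hq : 0 < q) (a b : ℝ) :
    qBracket q (a + b) = qBracket q a + q ^ a * qBracket q b := by
  simp only [qBracket, Real.rpow_add hq]
  ring

lemma qBracket_zero (q : ℝ) : qBracket q 0 = 0 := by simp [qBracket]

section genStirling

variable (s q : ℝ)

lemma genStirling_succ_zero (n : ℕ) : genStirling s q (n + 1) 0 = 0 := rfl

lemma genStirling_of_lt {n k : ℕ} (h : n < k) : genStirling s q n k = 0 := by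
  induction n generalizing k with
  | zero => obtain ⟨k, rfl⟩ := Nat.exists_eq_succ_of_ne_zero h.ne'; rfl
  | succ n _ =>
    obtain ⟨k, rfl⟩ := Nat.exists_eq_succ_of_ne_zero (Nat.zero_lt_of_lt h).ne'
    rw [genStirling, if_neg (by omega)]

lemma genStirling_succ_succ (n k : ℕ) :
    genStirling s q (n + 1) (k + 1) =
      q ^ (s * n - (s - 1) * k) * genStirling s q n k
        + qBracket q (s * n - (s - 1) * (k + 1)) * genStirling s q n (k + 1) := by
  rw [genStirling]
  split_ifs with h
  · rfl
  · rw [genStirling_of_lt s q (by omega), genStirling_of_lt s q (by omega)]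
    ring

lemma qBracket_mul_genStirling_zero_right (n : ℕ) :
    qBracket q (s * n) * genStirling s q n 0 = 0 := by
  cases n with
  | zero => simp [qBracket_zero]
  | succ n => rw [genStirling_succ_zero, mul_zero]

end genStirling

section qBinom

open Classical in
noncomputable def monotoneWeightSum (Q : ℝ) (a b : ℕ) : ℝ :=
  ∑ f ∈ univ.filter (fun f : Fin a → Fin b => Monotone f), Q ^ (∑ i, (f i : ℕ))

variable (Q : ℝ)

lemma qBinom_of_le {n k : ℕ} (h : k ≤ n) :
    qBinom Q n k = monotoneWeightSum Q (n - k) (k + 1) := by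
  rw [qBinom, if_pos h, monotoneWeightSum]

lemma qBinom_of_lt {n k : ℕ} (h : n < k) : qBinom Q n k = 0 := by
  rw [qBinom, if_neg (by omega)]

lemma monotoneWeightSum_zero_left (b : ℕ) : monotoneWeightSum Q 0 b = 1 := by
  simp [monotoneWeightSum, Subsingleton.monotone]

lemma monotoneWeightSum_one_right (a : ℕ) : monotoneWeightSum Q a 1 = 1 := by
  simp [monotoneWeightSum, filter_singleton, monotone_const]

lemma qBinom_zero_right (n : ℕ) : qBinom Q n 0 = 1 := by
  rw [qBinom_of_le Q (Nat.zero_le n), monotoneWeightSum_one_right]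

lemma monotone_cons_zero {m b : ℕ} {g : Fin m → Fin (b + 1)} (hg : Monotone g) :
    Monotone (Fin.cons 0 g : Fin (m + 1) → Fin (b + 1)) := by
  intro x y hxy
  induction x using Fin.cases with
  | zero => exact Fin.zero_le _
  | succ i =>
    induction y using Fin.cases with
    | zero => exact absurd hxy (by simp)
    | succ j => simpa using hg (Fin.succ_le_succ_iff.mp hxy)

open Classical in
lemma sum_monotone_head_eq_zero (m b : ℕ) :
    ∑ f ∈ (univ.filter (fun f : Fin (m + 1) → Fin (b + 1) => Monotone f)).filter (· 0 = 0),
      Q ^ (∑ i, (f i : ℕ)) = monotoneWeightSum Q m (b + 1) := by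
  refine sum_nbij' (fun f => f ∘ Fin.succ)
    (fun g => (Fin.cons 0 g : Fin (m + 1) → Fin (b + 1))) ?_ ?_ ?_ ?_ ?_
  · intro f hf
    simp only [mem_filter, mem_univ, true_and] at hf ⊢
    exact hf.1.comp Fin.strictMono_succ.monotone
  · intro g hg
    simp only [mem_filter, mem_univ, true_and] at hg ⊢
    exact ⟨monotone_cons_zero hg, rfl⟩
  · intro f hf
    simp only [mem_filter, mem_univ, true_and] at hf
    ext x : 1
    induction x using Fin.cases <;> simp [hf.2]
  · intro g _
    simp
  · intro f hf
    simp only [mem_filter, mem_univ, true_and] at hf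
    simp [Fin.sum_univ_succ, hf.2]

open Classical in
lemma sum_monotone_head_ne_zero (m b : ℕ) :
    ∑ f ∈ (univ.filter (fun f : Fin (m + 1) → Fin (b + 1) => Monotone f)).filter (¬· 0 = 0),
      Q ^ (∑ i, (f i : ℕ)) = Q ^ (m + 1) * monotoneWeightSum Q (m + 1) b := by
  have ne_zero {f : Fin (m + 1) → Fin (b + 1)}
      (hf : f ∈ (univ.filter (fun f => Monotone f)).filter (¬· 0 = 0)) (x : Fin (m + 1)) :
      f x ≠ 0 := by
    simp only [mem_filter, mem_univ, true_and] at hf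
    exact fun hx => hf.2 (Fin.le_zero_iff.mp (hx ▸ hf.1 (Fin.zero_le x)))
  rw [monotoneWeightSum, mul_sum]
  refine sum_bij' (fun f hf x => (f x).pred (ne_zero hf x)) (fun g _ x => (g x).succ)
    ?_ ?_ ?_ ?_ ?_
  · intro f hf
    have hmono := (mem_filter.mp (mem_filter.mp hf).1).2
    simp only [mem_filter, mem_univ, true_and]
    exact fun x y hxy => Fin.pred_le_pred_iff.mpr (hmono hxy)
  · intro g hg
    simp only [mem_filter, mem_univ, true_and] at hg ⊢
    exact ⟨fun x y hxy => Fin.succ_le_succ_iff.mpr (hg hxy), Fin.succ_ne_zero _⟩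
  · intro f hf
    simp
  · intro g _
    simp
  · intro f hf
    have hsum : ∑ i, (f i : ℕ) = ∑ i, (((f i).pred (ne_zero hf i) : ℕ) + 1) :=
      sum_congr rfl fun i _ => by
        have := Fin.pos_iff_ne_zero.mpr (ne_zero hf i)
        rw [Fin.val_pred]
        omega
    rw [hsum, sum_add_distrib, pow_add]
    simp [mul_comm]

-- Split by the first entry: if it is `0` drop it, otherwise lower every entry by one.
open Classical in
lemma monotoneWeightSum_succ_succ (m b : ℕ) :
    monotoneWeightSum Q (m + 1) (b + 1) =
      Q ^ (m + 1) * monotoneWeightSum Q (m + 1) b + monotoneWeightSum Q m (b + 1) := by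
  rw [monotoneWeightSum, ← sum_filter_add_sum_filter_not _ (· 0 = 0),
    sum_monotone_head_eq_zero, sum_monotone_head_ne_zero, add_comm]

lemma qBinom_succ_succ (n k : ℕ) :
    qBinom Q (n + 1) (k + 1) = Q ^ (n - k) * qBinom Q n k + qBinom Q n (k + 1) := by
  rcases lt_or_ge n k with h | h
  · rw [qBinom_of_lt Q (by omega), qBinom_of_lt Q h, qBinom_of_lt Q (by omega)]
    ring
  obtain ⟨m, rfl⟩ := Nat.exists_eq_add_of_le h
  rw [qBinom_of_le Q (by omega), qBinom_of_le Q h, Nat.add_sub_add_right, Nat.add_sub_cancel_left]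
  cases m with
  | zero =>
    rw [qBinom_of_lt Q (by omega), monotoneWeightSum_zero_left, monotoneWeightSum_zero_left]
    ring
  | succ m =>
    rw [qBinom_of_le Q (by omega), monotoneWeightSum_succ_succ,
      show k + (m + 1) - (k + 1) = m by omega]

end qBinom

lemma sum_range_succ_eq_of_shift {M : Type*} [AddCommMonoid M] (f g h : ℕ → M) (n : ℕ)
    (h_zero : f 0 = h 0) (h_succ : ∀ r, f (r + 1) = g r + h (r + 1)) (h_top : h (n + 1) = 0) :
    ∑ r ∈ range (n + 2), f r = ∑ r ∈ range (n + 1), (g r + h r) := by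
  rw [sum_range_succ', sum_congr rfl fun r _ => h_succ r, sum_add_distrib, add_assoc, h_zero,
    ← sum_range_succ' h, sum_range_succ h, h_top, add_zero, sum_add_distrib]

section Expansions

variable (q s α : ℝ)

noncomputable def leftExpansion (n k : ℕ) : ℝ :=
  ∑ r ∈ range (n + 1),
    q ^ (α * (r : ℝ)) * qBinom (q ^ s) n r * genStirling s q r k *
      ∏ i ∈ range (n - r), qBracket q (α + s * (i : ℝ))

noncomputable def rightExpansion (n k : ℕ) : ℝ :=
  ∑ r ∈ range (n + 1),
    q ^ (α * (k : ℝ)) * genStirling s q n r * qBinom (q ^ (s - 1)) r k *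
      ∏ i ∈ range (r - k), qBracket q (α + (i : ℝ) * (s - 1))

noncomputable def augStirling : ℕ → ℕ → ℝ
  | 0, 0 => 1
  | 0, _ + 1 => 0
  | n + 1, 0 => qBracket q (s * n + α) * augStirling n 0
  | n + 1, k + 1 =>
    q ^ (s * n - (s - 1) * k + α) * augStirling n k
      + qBracket q (s * n - (s - 1) * (k + 1) + α) * augStirling n (k + 1)

variable {q}

lemma leftExpansion_succ (hq : 0 < q) (n k : ℕ) :
    leftExpansion q s α (n + 1) k =
      ∑ r ∈ range (n + 1),
        q ^ (α * (r : ℝ)) * qBinom (q ^ s) n r *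
          (∏ i ∈ range (n - r), qBracket q (α + s * (i : ℝ))) *
          (q ^ α * (q ^ s) ^ (n - r) * genStirling s q (r + 1) k
            + qBracket q (α + s * ((n - r : ℕ) : ℝ)) * genStirling s q r k) := by
  rw [leftExpansion]
  refine (sum_range_succ_eq_of_shift _
    (fun r => q ^ (α * ((r + 1 : ℕ) : ℝ)) * ((q ^ s) ^ (n - r) * qBinom (q ^ s) n r) *
      genStirling s q (r + 1) k * ∏ i ∈ range (n - r), qBracket q (α + s * (i : ℝ)))
    (fun r => q ^ (α * (r : ℝ)) * qBinom (q ^ s) n r * genStirling s q r k *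
      ∏ i ∈ range (n + 1 - r), qBracket q (α + s * (i : ℝ))) n ?_ ?_ ?_).trans ?_
  · simp [qBinom_zero_right]
  · intro r
    rw [qBinom_succ_succ, Nat.add_sub_add_right]
    ring
  · rw [qBinom_of_lt _ (Nat.lt_succ_self n)]
    ring
  · refine sum_congr rfl fun r hr => ?_
    rw [Nat.sub_add_comm (Nat.le_of_lt_succ (mem_range.mp hr)), prod_range_succ,
      Nat.cast_succ, mul_add_one, Real.rpow_add hq]
    ring

lemma leftExpansion_succ_succ (hq : 0 < q) (n k : ℕ) :
    leftExpansion q s α (n + 1) (k + 1) =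
      q ^ (s * n - (s - 1) * k + α) * leftExpansion q s α n k
        + qBracket q (s * n - (s - 1) * (k + 1) + α) * leftExpansion q s α n (k + 1) := by
  rw [leftExpansion_succ s α hq, leftExpansion, leftExpansion, mul_sum, mul_sum,
    ← sum_add_distrib]
  refine sum_congr rfl fun r hr => ?_
  obtain ⟨m, rfl⟩ := Nat.exists_eq_add_of_le (mem_range_succ_iff.mp hr)
  have h_pow : q ^ α * (q ^ s) ^ m = q ^ (α + s * m) := by
    rw [← Real.rpow_mul_natCast hq.le, Real.rpow_add hq]
  have h_first : q ^ (α + s * m) * q ^ (s * r - (s - 1) * k) =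
      q ^ (s * (r + m) - (s - 1) * k + α) := by
    rw [← Real.rpow_add hq]
    ring_nf
  have h_second :
      qBracket q (α + s * m) + q ^ (α + s * m) * qBracket q (s * r - (s - 1) * (k + 1)) =
        qBracket q (s * (r + m) - (s - 1) * (k + 1) + α) := by
    rw [← qBracket_add hq]
    ring_nf
  rw [Nat.add_sub_cancel_left, genStirling_succ_succ, h_pow]
  push_cast
  set w := q ^ (α * r) * qBinom (q ^ s) (r + m) r * ∏ i ∈ range m, qBracket q (α + s * i)
  linear_combination (w * genStirling s q r k) * h_first
    + (w * genStirling s q r (k + 1)) * h_second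

lemma leftExpansion_succ_zero (hq : 0 < q) (n : ℕ) :
    leftExpansion q s α (n + 1) 0 = qBracket q (s * n + α) * leftExpansion q s α n 0 := by
  rw [leftExpansion_succ s α hq, leftExpansion, mul_sum]
  refine sum_congr rfl fun r _ => ?_
  cases r with
  | zero => simp only [Nat.sub_zero, CharP.cast_eq_zero, genStirling_succ_zero]; ring_nf
  | succ r => simp only [genStirling_succ_zero]; ring

lemma qBracket_mul_prod_add (hq : 0 < q) (N K : ℝ) (m : ℕ) :
    q ^ (N - (s - 1) * (K + m)) * ∏ i ∈ range (m + 1), qBracket q (α + i * (s - 1))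
      + qBracket q (N - (s - 1) * (K + m)) * ∏ i ∈ range m, qBracket q (α + i * (s - 1))
    = qBracket q (N - (s - 1) * K + α) * ∏ i ∈ range m, qBracket q (α + i * (s - 1)) := by
  have h : qBracket q (N - (s - 1) * K + α) =
      qBracket q (N - (s - 1) * (K + m)) +
        q ^ (N - (s - 1) * (K + m)) * qBracket q (α + (m : ℝ) * (s - 1)) := by
    rw [← qBracket_add hq]
    ring_nf
  rw [prod_range_succ, h]
  ring

lemma rightExpansion_succ (n k : ℕ) :
    rightExpansion q s α (n + 1) k =
      q ^ (α * (k : ℝ)) * ∑ r ∈ range (n + 1), genStirling s q n r *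
        (q ^ (s * n - (s - 1) * r) * qBinom (q ^ (s - 1)) (r + 1) k *
            ∏ i ∈ range (r + 1 - k), qBracket q (α + (i : ℝ) * (s - 1))
          + qBracket q (s * n - (s - 1) * r) * qBinom (q ^ (s - 1)) r k *
            ∏ i ∈ range (r - k), qBracket q (α + (i : ℝ) * (s - 1))) := by
  have h_factor : rightExpansion q s α (n + 1) k = q ^ (α * (k : ℝ)) *
      ∑ r ∈ range (n + 2), genStirling s q (n + 1) r * qBinom (q ^ (s - 1)) r k *
        ∏ i ∈ range (r - k), qBracket q (α + (i : ℝ) * (s - 1)) := by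
    rw [rightExpansion, mul_sum]
    exact sum_congr rfl fun _ _ => by ring
  rw [h_factor]
  congr 1
  refine (sum_range_succ_eq_of_shift _
    (fun r => genStirling s q n r *
      (q ^ (s * n - (s - 1) * r) * qBinom (q ^ (s - 1)) (r + 1) k *
        ∏ i ∈ range (r + 1 - k), qBracket q (α + (i : ℝ) * (s - 1))))
    (fun r => genStirling s q n r *
      (qBracket q (s * n - (s - 1) * r) * qBinom (q ^ (s - 1)) r k *
        ∏ i ∈ range (r - k), qBracket q (α + (i : ℝ) * (s - 1)))) n ?_ ?_ ?_).trans ?_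
  · have := qBracket_mul_genStirling_zero_right s q n
    simp only [genStirling_succ_zero, CharP.cast_eq_zero, mul_zero, sub_zero]
    linear_combination -(qBinom (q ^ (s - 1)) 0 k *
      ∏ i ∈ range (0 - k), qBracket q (α + (i : ℝ) * (s - 1))) * this
  · intro r
    rw [genStirling_succ_succ]
    push_cast
    ring
  · rw [genStirling_of_lt s q (Nat.lt_succ_self n)]
    ring
  · exact sum_congr rfl fun r _ => (mul_add _ _ _).symm

lemma rightExpansion_succ_zero (hq : 0 < q) (n : ℕ) :
    rightExpansion q s α (n + 1) 0 = qBracket q (s * n + α) * rightExpansion q s α n 0 := by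
  rw [rightExpansion_succ, rightExpansion, mul_sum, mul_sum]
  refine sum_congr rfl fun r _ => ?_
  have h := qBracket_mul_prod_add s α hq (s * n) 0 r
  simp only [zero_add, mul_zero, sub_zero] at h
  simp only [qBinom_zero_right, Nat.sub_zero, CharP.cast_eq_zero, mul_zero, mul_one]
  linear_combination q ^ (0 : ℝ) * genStirling s q n r * h

lemma rightExpansion_succ_succ (hq : 0 < q) (n k : ℕ) :
    rightExpansion q s α (n + 1) (k + 1) =
      q ^ (s * n - (s - 1) * k + α) * rightExpansion q s α n k
        + qBracket q (s * n - (s - 1) * (k + 1) + α) * rightExpansion q s α n (k + 1) := by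
  rw [rightExpansion_succ, rightExpansion, rightExpansion, mul_sum, mul_sum, mul_sum,
    ← sum_add_distrib]
  refine sum_congr rfl fun r _ => ?_
  rw [qBinom_succ_succ, Nat.add_sub_add_right]
  set P : ℕ → ℝ := fun m => ∏ i ∈ range m, qBracket q (α + (i : ℝ) * (s - 1))
  set B := qBinom (q ^ (s - 1))
  have h_old :
      q ^ (α * ((k + 1 : ℕ) : ℝ)) * q ^ (s * n - (s - 1) * r) * (q ^ (s - 1)) ^ (r - k)
          * B r k * P (r - k) =
        q ^ (s * n - (s - 1) * k + α) * (q ^ (α * (k : ℝ)) * B r k * P (r - k)) := by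
    rcases lt_or_ge r k with h | h
    · simp [B, qBinom_of_lt _ h]
    obtain ⟨m, rfl⟩ := Nat.exists_eq_add_of_le h
    have h_exp : q ^ (α * ((k + 1 : ℕ) : ℝ)) * q ^ (s * n - (s - 1) * ((k + m : ℕ) : ℝ))
        * q ^ ((s - 1) * m) = q ^ (s * n - (s - 1) * k + α) * q ^ (α * (k : ℝ)) := by
      simp only [← Real.rpow_add hq]
      push_cast
      ring_nf
    rw [Nat.add_sub_cancel_left, ← Real.rpow_mul_natCast hq.le]
    linear_combination B (k + m) k * P m * h_exp
  have h_new : q ^ (s * n - (s - 1) * r) * B r (k + 1) * P (r - k)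
      + qBracket q (s * n - (s - 1) * r) * B r (k + 1) * P (r - (k + 1))
      = qBracket q (s * n - (s - 1) * (k + 1) + α) * B r (k + 1) * P (r - (k + 1)) := by
    rcases lt_or_ge r (k + 1) with h | h
    · simp [B, qBinom_of_lt _ h]
    obtain ⟨m, rfl⟩ := Nat.exists_eq_add_of_le h
    have := qBracket_mul_prod_add s α hq (s * n) (k + 1) m
    rw [Nat.add_sub_cancel_left, show k + 1 + m - k = m + 1 by omega]
    push_cast at this ⊢
    linear_combination B (k + 1 + m) (k + 1) * this
  linear_combination genStirling s q n r * h_old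
    + q ^ (α * ((k + 1 : ℕ) : ℝ)) * genStirling s q n r * h_new

lemma leftExpansion_eq_augStirling (hq : 0 < q) (n k : ℕ) :
    leftExpansion q s α n k = augStirling q s α n k := by
  induction n generalizing k with
  | zero => cases k <;> simp [leftExpansion, augStirling, qBinom_zero_right, genStirling]
  | succ n ih =>
    cases k with
    | zero => rw [leftExpansion_succ_zero s α hq, ih, augStirling]
    | succ k => rw [leftExpansion_succ_succ s α hq, ih, ih, augStirling]

lemma rightExpansion_eq_augStirling (hq : 0 < q) (n k : ℕ) :
    rightExpansion q s α n k = augStirling q s α n k := by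
  induction n generalizing k with
  | zero =>
    cases k <;> simp [rightExpansion, augStirling, qBinom_zero_right, genStirling, qBinom_of_lt]
  | succ n ih =>
    cases k with
    | zero => rw [rightExpansion_succ_zero s α hq, ih, augStirling]
    | succ k => rw [rightExpansion_succ_succ s α hq, ih, ih, augStirling]

end Expansions

theorem two_expansions_eq_general (q s : ℝ) (hq : 0 < q) (n k : ℕ) (α : ℝ) :
    ∑ r ∈ Finset.range (n + 1),
        q ^ (α * (r : ℝ)) * qBinom (q ^ s) n r * genStirling s q r k *
          ∏ i ∈ Finset.range (n - r), qBracket q (α + s * (i : ℝ))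
    = ∑ r ∈ Finset.range (n + 1),
        q ^ (α * (k : ℝ)) * genStirling s q n r * qBinom (q ^ (s - 1)) r k *
          ∏ i ∈ Finset.range (r - k), qBracket q (α + (i : ℝ) * (s - 1)) :=
  (leftExpansion_eq_augStirling s α hq n k).trans (rightExpansion_eq_augStirling s α hq n k).symm

/-- Two expansions for the total weight of all placements of `n - k` rooks on the
augmented staircase board `J'_{n;α}`. -/
theorem two_expansions_eq (q s : ℝ) (hq : 0 < q) (hq1 : q ≠ 1) (n k : ℕ) (α : ℝ) :
    ∑ r ∈ Finset.range (n + 1),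
        q ^ (α * (r : ℝ)) * qBinom (q ^ s) n r * genStirling s q r k *
          ∏ i ∈ Finset.range (n - r), qBracket q (α + s * (i : ℝ))
    = ∑ r ∈ Finset.range (n + 1),
        q ^ (α * (k : ℝ)) * genStirling s q n r * qBinom (q ^ (s - 1)) r k *
          ∏ i ∈ Finset.range (r - k), qBracket q (α + (i : ℝ) * (s - 1)) :=
  two_expansions_eq_general q s hq n k α
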